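/- Let F be a field of characteristic p > 2, R = F[h, c] the polynomial algebra in two commuting variables, and φ the F-algebra automorphism of R determined by φ(h) = h − 1 and φ(c) = c. Then the φ-fixed subalgebra {r ∈ R : φ(r) = r} equals the F-subalgebra of R generated by c and h^p − h, and every ideal J of R with φ(J) ⊆ J is generated, as an ideal of R, by its set of φ-fixed elements {f ∈ J : φ(f) = f}. -/

import Mathlib

/-!
Write `h = X 0`, `c = X 1` and `g = h ^ p - h`, which is `φ`-invariant because
`(h - 1) ^ p = h ^ p - 1` in characteristic `p`.

Fixed subalgebra: view `F[h, c]` as `A[h]` with `A = F[c]`, on which `φ` is the Taylor shift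
`f(h) ↦ f(h - 1)`. Dividing a fixed `f` by the monic `g`, uniqueness of the quotient and the
remainder makes both fixed. A fixed remainder `r` satisfies `r(k) = r(0)` for `k = 0, …, p - 1`
while `deg r < p`, so `r` is constant; induction on the degree handles the quotient.

Stable ideals: `φ ^ p = 1`, so the orbit sums `Tr s = ∑_{k < p} φ^k s` are fixed and lie in `J`
whenever `s` does, and every `r` is recovered from them as
`r = Tr r - ∑_{i < p} h ^ i * Tr (h ^ (p - 1 - i) * r)`.
-/

open Finset Polynomial

theorem map_pow_char_sub_self {R G : Type*} [CommRing R] (p : ℕ) [Fact p.Prime] [CharP R p]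
    [FunLike G R R] [RingHomClass G R R] {σ : G} {x : R} (hx : σ x = x - 1) :
    σ (x ^ p - x) = x ^ p - x := by
  rw [map_sub, map_pow, hx, sub_pow_char, one_pow]
  ring

namespace AlgEquiv

variable {F R : Type*} [CommSemiring F] [CommRing R] [Algebra F R] (φ : R ≃ₐ[F] R)

def orbitSum (n : ℕ) (r : R) : R := ∑ k ∈ range n, (φ ^ k) r

variable {φ}

theorem apply_orbitSum {n : ℕ} (hφ : φ ^ n = 1) (r : R) :
    φ (orbitSum φ n r) = orbitSum φ n r := by
  have hshift : φ (orbitSum φ n r) = ∑ k ∈ range n, (φ ^ (k + 1)) r := by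
    simp only [orbitSum, map_sum, pow_succ', mul_apply]
  have hfirst := sum_range_succ' (fun k => (φ ^ k) r) n
  have hlast := sum_range_succ (fun k => (φ ^ k) r) n
  rw [pow_zero, one_apply] at hfirst
  rw [hφ, one_apply] at hlast
  rw [hshift, orbitSum]
  linear_combination hlast - hfirst

theorem pow_apply_mem {J : Ideal R} (hJ : ∀ f ∈ J, φ f ∈ J) (k : ℕ) {r : R}
    (hr : r ∈ J) : (φ ^ k) r ∈ J := by
  induction k with
  | zero => exact hr
  | succ k ih => rw [pow_succ', mul_apply]; exact hJ _ ih

theorem orbitSum_mem {J : Ideal R} (hJ : ∀ f ∈ J, φ f ∈ J) (n : ℕ) {r : R} (hr : r ∈ J) :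
    orbitSum φ n r ∈ J :=
  J.sum_mem fun k _ => pow_apply_mem hJ k hr

theorem pow_apply_eq_sub_natCast {x : R} (hx : φ x = x - 1) (k : ℕ) :
    (φ ^ k) x = x - k := by
  induction k with
  | zero => simp
  | succ k ih => rw [pow_succ', mul_apply, ih, map_sub, hx, map_natCast]; push_cast; ring

end AlgEquiv

section CharP

variable {R : Type*} [CommRing R] (p : ℕ) [Fact p.Prime] [CharP R p]

theorem geom_sum₂_sub_natCast_eq_one (x : R) {k : ℕ} (hk : ¬p ∣ k) :
    ∑ i ∈ range p, x ^ i * (x - k) ^ (p - 1 - i) = 1 := by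
  have hfrob : (k : R) ^ p = k := by rw [← frobenius_def, map_natCast]
  have hgeom := (Commute.all x (x - k)).geom_sum₂_mul p
  rw [sub_sub_cancel, sub_pow_char, hfrob, sub_sub_cancel] at hgeom
  exact ((CharP.isUnit_natCast_iff (R := R) Fact.out).2 hk).mul_eq_right.1 hgeom

variable {F : Type*} [CommSemiring F] [Algebra F R] {φ : R ≃ₐ[F] R}

open AlgEquiv

/- The coefficient of `(φ ^ k) r` on the left is `∑ x ^ i * (x - k) ^ (p - 1 - i)`, which is
`(x ^ p - (x - k) ^ p) / k = 1` for `0 < k < p` and `p * x ^ (p - 1) = 0` for `k = 0`. -/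
theorem AlgEquiv.sum_pow_mul_orbitSum {x : R} (hx : φ x = x - 1) (r : R) :
    ∑ i ∈ range p, x ^ i * orbitSum φ p (x ^ (p - 1 - i) * r) = orbitSum φ p r - r := by
  have hcoeff : ∀ k ∈ range p,
      (∑ i ∈ range p, x ^ i * (x - k) ^ (p - 1 - i)) * (φ ^ k) r
        = (φ ^ k) r - if k = 0 then r else 0 := by
    intro k hk
    rcases eq_or_ne k 0 with rfl | hk0
    · simp [geom_sum₂_self]
    · have hpk : ¬p ∣ k := Nat.not_dvd_of_pos_of_lt (Nat.pos_of_ne_zero hk0) (mem_range.1 hk)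
      simp [geom_sum₂_sub_natCast_eq_one p x hpk, hk0]
  calc ∑ i ∈ range p, x ^ i * orbitSum φ p (x ^ (p - 1 - i) * r)
      = ∑ k ∈ range p, (∑ i ∈ range p, x ^ i * (x - k) ^ (p - 1 - i)) * (φ ^ k) r := by
        simp only [orbitSum, mul_sum, sum_mul, map_mul, map_pow, pow_apply_eq_sub_natCast hx]
        rw [sum_comm]
        simp only [mul_assoc]
    _ = orbitSum φ p r - r := by
        rw [sum_congr rfl hcoeff, sum_sub_distrib, sum_ite_eq',
          if_pos (mem_range.2 (Fact.out : p.Prime).pos)]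
        rfl

theorem Ideal.eq_span_fixed_of_apply_eq_sub_one (hφ : φ ^ p = 1) {x : R} (hx : φ x = x - 1)
    {J : Ideal R} (hJ : ∀ f ∈ J, φ f ∈ J) :
    J = Ideal.span {f | f ∈ J ∧ φ f = f} := by
  refine le_antisymm (fun r hr => ?_) (Ideal.span_le.2 fun f hf => hf.1)
  have horbit : ∀ s ∈ J, orbitSum φ p s ∈ Ideal.span {f | f ∈ J ∧ φ f = f} :=
    fun s hs => Ideal.subset_span ⟨orbitSum_mem hJ p hs, apply_orbitSum hφ s⟩
  have hdecomp :
      r = orbitSum φ p r - ∑ i ∈ range p, x ^ i * orbitSum φ p (x ^ (p - 1 - i) * r) := by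
    rw [sum_pow_mul_orbitSum p hx r, sub_sub_cancel]
  rw [hdecomp]
  exact sub_mem (horbit r hr)
    (Ideal.sum_mem _ fun i _ => Ideal.mul_mem_left _ _ (horbit _ (J.mul_mem_left _ hr)))

end CharP

namespace Polynomial

variable {A : Type*} [CommRing A] [IsDomain A] (p : ℕ) [Fact p.Prime] [CharP A p]

theorem eq_C_of_taylor_neg_one_eq_self {f : A[X]} (hf : taylor (-1) f = f)
    (hdeg : f.natDegree < p) : f = C (f.eval 0) := by
  have heval : ∀ n : ℕ, f.eval (n : A) = f.eval 0 := by
    intro n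
    induction n with
    | zero => rw [Nat.cast_zero]
    | succ n ih =>
      have hshift := congrArg (eval ((n : A) + 1)) hf
      rwa [taylor_eval, add_neg_cancel_right, ih, eq_comm, ← Nat.cast_succ] at hshift
  have hroots : f - C (f.eval 0) = 0 := by
    refine eq_zero_of_natDegree_lt_card_of_eval_eq_zero _
      (ZMod.castHom (dvd_refl p) A).injective (fun z => ?_) ?_
    · rw [eval_sub, eval_C, ZMod.castHom_apply, ← ZMod.natCast_val, heval, sub_self]
    · rwa [natDegree_sub_C, ZMod.card]
  exact sub_eq_zero.1 hroots

theorem mem_adjoin_X_pow_sub_X_of_taylor_neg_one_eq_self {f : A[X]}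
    (hf : taylor (-1) f = f) : f ∈ Algebra.adjoin A {X ^ p - X} := by
  have hp : 1 < p := (Fact.out : p.Prime).one_lt
  set g : A[X] := X ^ p - X
  have hg : g.Monic := monic_X_pow_sub (by rw [degree_X]; exact_mod_cast hp)
  have hgdeg : g.degree = p := by
    rw [degree_sub_eq_left_of_degree_lt] <;> rw [degree_X_pow]
    rw [degree_X]; exact_mod_cast hp
  have hgfix : taylor (-1) g = g :=
    map_pow_char_sub_self p (σ := taylorAlgHom (-1 : A)) (by simp [sub_eq_add_neg])
  have hgmem : g ∈ Algebra.adjoin A {g} := Algebra.self_mem_adjoin_singleton A g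
  induction hn : f.natDegree using Nat.strong_induction_on generalizing f with
  | _ n ih =>
    obtain ⟨hq, hr⟩ :
        f /ₘ g = taylor (-1) (f /ₘ g) ∧ f %ₘ g = taylor (-1) (f %ₘ g) := by
      refine div_modByMonic_unique _ _ hg ⟨?_, ?_⟩
      · conv_rhs => rw [← hf, ← modByMonic_add_div f g]
        rw [map_add, taylor_mul, hgfix]
      · rw [degree_taylor]
        exact degree_modByMonic_lt f hg
    have hr_mem : f %ₘ g ∈ Algebra.adjoin A {g} := by
      have hg1 : g ≠ 1 := by
        rintro h
        rw [h, degree_one] at hgdeg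
        exact (Fact.out : p.Prime).ne_zero (by exact_mod_cast hgdeg.symm)
      have hr_deg := natDegree_modByMonic_lt f hg hg1
      rw [natDegree_eq_of_degree_eq_some hgdeg] at hr_deg
      rw [eq_C_of_taylor_neg_one_eq_self p hr.symm hr_deg]
      exact Subalgebra.algebraMap_mem _ _
    rw [← modByMonic_add_div f g]
    refine add_mem hr_mem (mul_mem hgmem ?_)
    rcases eq_or_ne (f /ₘ g) 0 with hq0 | hq0
    · rw [hq0]; exact zero_mem _
    have hf0 : f ≠ 0 := by rintro rfl; simp at hq0
    refine ih _ ?_ hq.symm rfl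
    rw [← hn]
    refine natDegree_lt_natDegree hq0 (degree_divByMonic_lt f g hf0 ?_)
    rw [hgdeg]; exact_mod_cast (Fact.out : p.Prime).pos

end Polynomial

namespace MvPolynomial

variable {F : Type*} [Field F]

theorem finSuccEquiv_apply_eq_taylor {φ : MvPolynomial (Fin 2) F ≃ₐ[F] MvPolynomial (Fin 2) F}
    (hφh : φ (X 0) = X 0 - 1) (hφc : φ (X 1) = X 1) (r : MvPolynomial (Fin 2) F) :
    finSuccEquiv F 1 (φ r) = taylor (-1) (finSuccEquiv F 1 r) := by
  have hext : (finSuccEquiv F 1).toAlgHom.comp φ.toAlgHom =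
      ((taylorAlgHom (-1)).restrictScalars F).comp (finSuccEquiv F 1).toAlgHom := by
    refine algHom_ext fun i => ?_
    fin_cases i
    · simp [hφh, finSuccEquiv_X_zero, sub_eq_add_neg]
    · have hX1 : finSuccEquiv F 1 (X 1) = Polynomial.C (X 0) := finSuccEquiv_X_succ (j := 0)
      simp [hφc, hX1]
  exact congrArg (· r) hext

theorem finSuccEquiv_symm_mem_adjoin {q f : (MvPolynomial (Fin 1) F)[X]}
    (hf : f ∈ Algebra.adjoin (MvPolynomial (Fin 1) F) {q}) :
    (finSuccEquiv F 1).symm f ∈ Algebra.adjoin F {X 1, (finSuccEquiv F 1).symm q} := by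
  induction hf using Algebra.adjoin_induction with
  | mem x hx => exact Algebra.subset_adjoin (by simp [Set.mem_singleton_iff.1 hx])
  | algebraMap a =>
    have hle : Algebra.adjoin F (Set.range X) ≤
        (Algebra.adjoin F {X 1, (finSuccEquiv F 1).symm q}).comap
          ((finSuccEquiv F 1).symm.toAlgHom.comp
            (IsScalarTower.toAlgHom F (MvPolynomial (Fin 1) F) (MvPolynomial (Fin 1) F)[X])) := by
      refine Algebra.adjoin_le ?_
      rintro _ ⟨i, rfl⟩
      have hX1 : finSuccEquiv F 1 (X 1) = Polynomial.C (X i) := by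
        rw [Subsingleton.elim i 0]; exact finSuccEquiv_X_succ (j := 0)
      refine Algebra.subset_adjoin ?_
      simp [← hX1]
    exact hle (by rw [adjoin_range_X]; trivial)
  | add x y _ _ hx hy => rw [map_add]; exact add_mem hx hy
  | mul x y _ _ hx hy => rw [map_mul]; exact mul_mem hx hy

end MvPolynomial

theorem stmt_14_general {F : Type*} [Field F] (p : ℕ) [Fact p.Prime] [CharP F p]
    (φ : MvPolynomial (Fin 2) F ≃ₐ[F] MvPolynomial (Fin 2) F)
    (hφh : φ (MvPolynomial.X 0) = MvPolynomial.X 0 - 1)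
    (hφc : φ (MvPolynomial.X 1) = MvPolynomial.X 1) :
    ({r : MvPolynomial (Fin 2) F | φ r = r} =
      ↑(Algebra.adjoin F {(MvPolynomial.X 1 : MvPolynomial (Fin 2) F),
          MvPolynomial.X 0 ^ p - MvPolynomial.X 0})) ∧
    (∀ J : Ideal (MvPolynomial (Fin 2) F), (∀ f ∈ J, φ f ∈ J) →
      J = Ideal.span {f : MvPolynomial (Fin 2) F | f ∈ J ∧ φ f = f}) := by
  have hφp : φ ^ p = 1 := by
    refine AlgEquiv.coe_toAlgHom_injective (MvPolynomial.algHom_ext fun i => ?_)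
    fin_cases i
    · simp [AlgEquiv.pow_apply_eq_sub_natCast hφh]
    · simpa [AlgEquiv.coe_pow] using (Function.IsFixedPt.iterate hφc p).eq
  refine ⟨Set.ext fun r => ⟨fun hr => ?_, fun hr => ?_⟩,
    fun J hJ => Ideal.eq_span_fixed_of_apply_eq_sub_one p hφp hφh hJ⟩
  · have hmem := mem_adjoin_X_pow_sub_X_of_taylor_neg_one_eq_self p
      (f := MvPolynomial.finSuccEquiv F 1 r)
      (by rw [← MvPolynomial.finSuccEquiv_apply_eq_taylor hφh hφc, hr])
    have hX0 : (MvPolynomial.finSuccEquiv F 1).symm X = MvPolynomial.X 0 := by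
      rw [AlgEquiv.symm_apply_eq, MvPolynomial.finSuccEquiv_X_zero]
    simpa [hX0] using MvPolynomial.finSuccEquiv_symm_mem_adjoin hmem
  · refine Algebra.adjoin_le (S := AlgHom.equalizer φ.toAlgHom (AlgHom.id F _)) ?_ hr
    rintro _ (rfl | rfl)
    · exact hφc
    · exact map_pow_char_sub_self p hφh

/-- Let `F` have characteristic `p > 2`, `R = F[h, c]` (with `h = X 0`,
`c = X 1`), and `φ` the `F`-algebra automorphism with `φ(h) = h − 1`, `φ(c) = c`.  Then
the `φ`-fixed subalgebra is the `F`-subalgebra generated by `c` and `h^p − h`, and every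
`φ`-stable ideal `J` of `R` is generated, as an ideal of `R`, by its `φ`-fixed elements. -/
theorem stmt_14 {F : Type*} [Field F] (p : ℕ) [Fact p.Prime] [CharP F p] (hp : 2 < p)
    (φ : MvPolynomial (Fin 2) F ≃ₐ[F] MvPolynomial (Fin 2) F)
    (hφh : φ (MvPolynomial.X 0) = MvPolynomial.X 0 - 1)
    (hφc : φ (MvPolynomial.X 1) = MvPolynomial.X 1) :
    ({r : MvPolynomial (Fin 2) F | φ r = r} =
      ↑(Algebra.adjoin F {(MvPolynomial.X 1 : MvPolynomial (Fin 2) F),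
          MvPolynomial.X 0 ^ p - MvPolynomial.X 0})) ∧
    (∀ J : Ideal (MvPolynomial (Fin 2) F), (∀ f ∈ J, φ f ∈ J) →
      J = Ideal.span {f : MvPolynomial (Fin 2) F | f ∈ J ∧ φ f = f}) :=
  stmt_14_general p φ hφh hφc
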